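/- Let G be a group, A = ⊕_{g∈G} A_g a G-graded unital *-algebra over ℂ whose unit fibre A_e is commutative, and χ a positive character of A_e. Then for every g ∈ G and all a, b ∈ A_g with χ(b* b) ≠ 0, setting λ := χ(b* a)/χ(b* b) ∈ ℂ, one has χ((a − λ·b)* (a − λ·b)) = 0. Consequently, the positive semidefinite sesquilinear form (a, b) ↦ χ(a* b) on A_g has rank at most one, i.e. the induced Hilbert space A_g ⊗_{A_e, χ} ℂ is at most one-dimensional. -/

import Mathlib

/-- A `G`-graded unital `⋆`-algebra over `ℂ`: a direct sum decomposition
`A = ⊕_{g ∈ G} A_g` into subspaces with `A_g · A_h ⊆ A_{gh}`, `(A_g)* = A_{g⁻¹}` and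
`1 ∈ A_e`. -/
structure GradedStarAlgebra (G : Type*) [Group G]
    (A : Type*) [Ring A] [Algebra ℂ A] [StarRing A] [StarModule ℂ A] where
  fiber : G → Submodule ℂ A
  mul_mem' : ∀ {g h : G} {a b : A}, a ∈ fiber g → b ∈ fiber h → a * b ∈ fiber (g * h)
  star_mem' : ∀ {g : G} {a : A}, a ∈ fiber g → star a ∈ fiber g⁻¹
  one_mem' : (1 : A) ∈ fiber 1
  decompose' : ∀ a : A, ∃ (F : Finset G) (c : G → A),
    (∀ g : G, c g ∈ fiber g) ∧ a = ∑ g ∈ F, c g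
  independent' : ∀ (F : Finset G) (c : G → A), (∀ g : G, c g ∈ fiber g) →
    ∑ g ∈ F, c g = 0 → ∀ g ∈ F, c g = 0

variable {G : Type*} [Group G]
variable {A : Type*} [Ring A] [Algebra ℂ A] [StarRing A] [StarModule ℂ A]

/-- A positive character of the unit fibre `A_e` of a `G`-graded unital `⋆`-algebra: a unital,
multiplicative, `ℂ`-linear, `⋆`-preserving functional on `A_e` such that `χ (a* a) ≥ 0` for
every `a ∈ A_g` and every `g ∈ G`. -/
structure PosChar (S : GradedStarAlgebra G A) where
  toFun : A → ℂ
  map_one' : toFun 1 = 1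
  map_mul' : ∀ x ∈ S.fiber 1, ∀ y ∈ S.fiber 1, toFun (x * y) = toFun x * toFun y
  map_add' : ∀ x ∈ S.fiber 1, ∀ y ∈ S.fiber 1, toFun (x + y) = toFun x + toFun y
  map_smul' : ∀ (c : ℂ), ∀ x ∈ S.fiber 1, toFun (c • x) = c * toFun x
  map_star' : ∀ x ∈ S.fiber 1, toFun (star x) = starRingEnd ℂ (toFun x)
  pos' : ∀ (g : G), ∀ a ∈ S.fiber g,
    0 ≤ (toFun (star a * a)).re ∧ (toFun (star a * a)).im = 0

/-!
The form `(a, b) ↦ χ (a* b)` is a positive semidefinite Hermitian form on `A_g`, so it satisfies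
Cauchy–Schwarz. Commutativity of `A_e` enters only through `z := a (b* b) - b (b* a)`: it gives
`z b* = (a b*)(b b*) - (b b*)(a b*) = 0`, hence already in `A`
`(b* b)((a* a)(b* b) - (a* b)(b* a)) = (b* b)(a* z) = (a* z)(b* b) = a* (z b*) b = 0`.
Applying `χ`, the Gram determinant vanishes when `χ (b* b) ≠ 0`; when `χ (b* b) = 0`,
Cauchy–Schwarz forces `χ (b* a) = 0`. The vanishing at `a - λ b` is then the usual expansion of
the form.
-/

namespace InnerProductSpace.Core

variable {𝕜 F : Type*} [RCLike 𝕜] [AddCommGroup F] [Module 𝕜 F] [PreInnerProductSpace.Core 𝕜 F]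

attribute [local instance] toPreInner'

theorem inner_eq_zero_of_inner_self_eq_zero {x : F} (y : F) (hx : inner 𝕜 x x = 0) :
    inner 𝕜 x y = 0 := by
  have h := inner_mul_inner_self_le (𝕜 := 𝕜) x y
  rw [hx, norm_inner_symm y x, map_zero, zero_mul, ← sq] at h
  exact norm_eq_zero.mp (pow_eq_zero_iff two_ne_zero |>.mp (le_antisymm h (sq_nonneg _)))

theorem inner_sub_div_smul_self_eq_zero {x y : F}
    (hgram : inner 𝕜 x x * inner 𝕜 y y = inner 𝕜 x y * inner 𝕜 y x) (hy : inner 𝕜 y y ≠ 0) :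
    inner 𝕜 (x - (inner 𝕜 y x / inner 𝕜 y y) • y) (x - (inner 𝕜 y x / inner 𝕜 y y) • y) = 0 := by
  rw [inner_sub_sub_self, inner_smul_left, inner_smul_right, inner_smul_left, inner_smul_right,
    map_div₀, inner_conj_symm, inner_conj_symm]
  field_simp
  linear_combination hgram

end InnerProductSpace.Core

namespace GradedStarAlgebra

variable (S : GradedStarAlgebra G A) {g : G} {a b : A}

theorem star_mul_mem_fiber_one (ha : a ∈ S.fiber g) (hb : b ∈ S.fiber g) :
    star a * b ∈ S.fiber 1 := by
  simpa using S.mul_mem' (S.star_mem' ha) hb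

theorem mul_star_mem_fiber_one (ha : a ∈ S.fiber g) (hb : b ∈ S.fiber g) :
    a * star b ∈ S.fiber 1 := by
  simpa using S.mul_mem' ha (S.star_mem' hb)

theorem mul_mem_fiber_of_mem_fiber_one (ha : a ∈ S.fiber g) (hb : b ∈ S.fiber 1) :
    a * b ∈ S.fiber g := by
  simpa using S.mul_mem' ha hb

theorem star_mul_self_mul_gramDet_eq_zero
    (hcomm : ∀ x ∈ S.fiber 1, ∀ y ∈ S.fiber 1, x * y = y * x)
    (ha : a ∈ S.fiber g) (hb : b ∈ S.fiber g) :
    star b * b * (star a * a * (star b * b) - star a * b * (star b * a)) = 0 := by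
  set z := a * (star b * b) - b * (star b * a) with hz_def
  have hz : z ∈ S.fiber g :=
    sub_mem (S.mul_mem_fiber_of_mem_fiber_one ha (S.star_mul_mem_fiber_one hb hb))
      (S.mul_mem_fiber_of_mem_fiber_one hb (S.star_mul_mem_fiber_one hb ha))
  have hzb : z * star b = 0 := by
    calc z * star b = a * star b * (b * star b) - b * star b * (a * star b) := by
          rw [hz_def]; noncomm_ring
      _ = 0 := by
        rw [hcomm _ (S.mul_star_mem_fiber_one ha hb) _ (S.mul_star_mem_fiber_one hb hb), sub_self]
  calc star b * b * (star a * a * (star b * b) - star a * b * (star b * a))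
      = star b * b * (star a * z) := by rw [hz_def]; noncomm_ring
    _ = star a * z * (star b * b) :=
        hcomm _ (S.star_mul_mem_fiber_one hb hb) _ (S.star_mul_mem_fiber_one ha hz)
    _ = star a * (z * star b) * b := by noncomm_ring
    _ = 0 := by rw [hzb, mul_zero, zero_mul]

end GradedStarAlgebra

namespace PosChar

variable {S : GradedStarAlgebra G A} (χ : PosChar S)

theorem map_zero : χ.toFun 0 = 0 := by
  simpa using χ.map_smul' 0 1 S.one_mem'

theorem map_sub {x y : A} (hx : x ∈ S.fiber 1) (hy : y ∈ S.fiber 1) :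
    χ.toFun (x - y) = χ.toFun x - χ.toFun y := by
  rw [sub_eq_add_neg, ← neg_one_smul ℂ y, χ.map_add' x hx _ (Submodule.smul_mem _ _ hy),
    χ.map_smul' _ _ hy]
  ring

theorem apply_star_mul_swap {g : G} {a b : A} (ha : a ∈ S.fiber g) (hb : b ∈ S.fiber g) :
    χ.toFun (star a * b) = starRingEnd ℂ (χ.toFun (star b * a)) := by
  rw [← χ.map_star' _ (S.star_mul_mem_fiber_one hb ha), star_mul, star_star]

abbrev fiberCore (g : G) : PreInnerProductSpace.Core ℂ (S.fiber g) where
  inner x y := χ.toFun (star (x : A) * y)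
  conj_inner_symm x y := (χ.apply_star_mul_swap x.2 y.2).symm
  re_inner_nonneg x := (χ.pos' g x x.2).1
  add_left x y z := by
    simp only [Submodule.coe_add, star_add, add_mul]
    exact χ.map_add' _ (S.star_mul_mem_fiber_one x.2 z.2) _ (S.star_mul_mem_fiber_one y.2 z.2)
  smul_left x y r := by
    simp only [Submodule.coe_smul, star_smul, smul_mul_assoc, Complex.star_def]
    exact χ.map_smul' _ _ (S.star_mul_mem_fiber_one x.2 y.2)

theorem apply_star_mul_self_mul_apply_star_mul_self_eq
    (hcomm : ∀ x ∈ S.fiber 1, ∀ y ∈ S.fiber 1, x * y = y * x)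
    {g : G} {a b : A} (ha : a ∈ S.fiber g) (hb : b ∈ S.fiber g) :
    χ.toFun (star a * a) * χ.toFun (star b * b) =
      χ.toFun (star a * b) * χ.toFun (star b * a) := by
  by_cases hb0 : χ.toFun (star b * b) = 0
  · let := χ.fiberCore g
    have hba : χ.toFun (star b * a) = 0 :=
      InnerProductSpace.Core.inner_eq_zero_of_inner_self_eq_zero (x := (⟨b, hb⟩ : S.fiber g))
        ⟨a, ha⟩ hb0
    rw [hb0, hba, mul_zero, mul_zero]
  · have hAA := S.star_mul_mem_fiber_one ha ha
    have hAB := S.star_mul_mem_fiber_one ha hb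
    have hBA := S.star_mul_mem_fiber_one hb ha
    have hBB := S.star_mul_mem_fiber_one hb hb
    have hAABB := S.mul_mem_fiber_of_mem_fiber_one hAA hBB
    have hABBA := S.mul_mem_fiber_of_mem_fiber_one hAB hBA
    have h := congrArg χ.toFun (S.star_mul_self_mul_gramDet_eq_zero hcomm ha hb)
    rw [χ.map_mul' _ hBB _ (sub_mem hAABB hABBA), χ.map_sub hAABB hABBA,
      χ.map_mul' _ hAA _ hBB, χ.map_mul' _ hAB _ hBA, χ.map_zero] at h
    exact sub_eq_zero.mp ((mul_eq_zero.mp h).resolve_left hb0)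

end PosChar

theorem posChar_form_rank_le_one (S : GradedStarAlgebra G A)
    (hcomm : ∀ x ∈ S.fiber 1, ∀ y ∈ S.fiber 1, x * y = y * x)
    (χ : PosChar S) (g : G) :
    (∀ a b : A, a ∈ S.fiber g → b ∈ S.fiber g → χ.toFun (star b * b) ≠ 0 →
      χ.toFun (star (a - (χ.toFun (star b * a) / χ.toFun (star b * b)) • b) *
        (a - (χ.toFun (star b * a) / χ.toFun (star b * b)) • b)) = 0) ∧
    (∀ a b : A, a ∈ S.fiber g → b ∈ S.fiber g →
      χ.toFun (star a * a) * χ.toFun (star b * b) =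
        χ.toFun (star a * b) * χ.toFun (star b * a)) := by
  let := χ.fiberCore g
  have hgram {a b : A} (ha : a ∈ S.fiber g) (hb : b ∈ S.fiber g) :=
    χ.apply_star_mul_self_mul_apply_star_mul_self_eq hcomm ha hb
  refine ⟨fun a b ha hb hb0 => ?_, fun a b ha hb => hgram ha hb⟩
  exact InnerProductSpace.Core.inner_sub_div_smul_self_eq_zero (x := (⟨a, ha⟩ : S.fiber g))
    (y := ⟨b, hb⟩) (hgram ha hb) hb0
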